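/- In the Euclidean bilevel setting with the Lipschitz-and-boundedness assumptions, the hypergradient map x ↦ ∇F(x) = ∇ₓ f(x, y*(x)) − ∇²_{xy} g(x, y*(x))[(∇²_{yy} g(x, y*(x)))⁻¹ ∇_y f(x, y*(x))] is Lipschitz with constant L_F := (L/μ + 1)(L + ρM/μ + ρLM/μ² + L²/μ): for all x₁, x₂ ∈ H₁, ‖∇F(x₁) − ∇F(x₂)‖ ≤ L_F ‖x₁ − x₂‖. -/

import Mathlib

open scoped RealInnerProductSpace

variable {H₁ : Type*} [NormedAddCommGroup H₁] [InnerProductSpace ℝ H₁] [FiniteDimensional ℝ H₁]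
variable {H₂ : Type*} [NormedAddCommGroup H₂] [InnerProductSpace ℝ H₂] [FiniteDimensional ℝ H₂]

/-- Partial gradient of a bifunction in the first variable: `∇ₓ f (x, y)`. -/
noncomputable def gradx (f : H₁ → H₂ → ℝ) (x : H₁) (y : H₂) : H₁ :=
  gradient (fun x' => f x' y) x

/-- Partial gradient of a bifunction in the second variable: `∇_y f (x, y)`. -/
noncomputable def grady (f : H₁ → H₂ → ℝ) (x : H₁) (y : H₂) : H₂ :=
  gradient (fun y' => f x y') y

/-- Partial Hessian `∇²_{yy} g(x,y)`, a continuous linear operator on `H₂`. -/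
noncomputable def hessyy (g : H₁ → H₂ → ℝ) (x : H₁) (y : H₂) : H₂ →L[ℝ] H₂ :=
  fderiv ℝ (fun y' => grady g x y') y

/-- Cross derivative `∇²_{yx} g(x,y) : H₁ → H₂`, the derivative in `x` of `∇_y g`. -/
noncomputable def hessyx (g : H₁ → H₂ → ℝ) (x : H₁) (y : H₂) : H₁ →L[ℝ] H₂ :=
  fderiv ℝ (fun x' => grady g x' y) x

/-- Cross derivative `∇²_{xy} g(x,y) : H₂ → H₁`, the adjoint of `∇²_{yx} g(x,y)`. -/
noncomputable def hessxy (g : H₁ → H₂ → ℝ) (x : H₁) (y : H₂) : H₂ →L[ℝ] H₁ :=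
  ContinuousLinearMap.adjoint (hessyx g x y)

/-! Strong convexity makes `∇_y g(x, ·)` strongly monotone, so its zero `y*(x)` is
`(L/μ)`-Lipschitz, and the inverse Hessians have norm at most `1/μ`; by the resolvent identity
two of them differ by at most `ρ ‖Δ‖ / μ²`. Splitting the difference of two hypergradients into
four terms, each is Lipschitz jointly in `(x, y)`, which gives the bound
`C (‖x₁ - x₂‖ + ‖y*(x₁) - y*(x₂)‖) ≤ C (1 + L/μ) ‖x₁ - x₂‖`. -/

section

variable {X Y Z : Type*} [SeminormedAddCommGroup X] [SeminormedAddCommGroup Y]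
  [SeminormedAddCommGroup Z]

theorem norm_sub_le_of_lipschitz_left_right {F : X → Y → Z} {K : ℝ}
    (hx : ∀ (y : Y) (x₁ x₂ : X), ‖F x₁ y - F x₂ y‖ ≤ K * ‖x₁ - x₂‖)
    (hy : ∀ (x : X) (y₁ y₂ : Y), ‖F x y₁ - F x y₂‖ ≤ K * ‖y₁ - y₂‖) (x₁ x₂ : X) (y₁ y₂ : Y) :
    ‖F x₁ y₁ - F x₂ y₂‖ ≤ K * (‖x₁ - x₂‖ + ‖y₁ - y₂‖) :=
  calc ‖F x₁ y₁ - F x₂ y₂‖ ≤ ‖F x₁ y₁ - F x₂ y₁‖ + ‖F x₂ y₁ - F x₂ y₂‖ :=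
        norm_sub_le_norm_sub_add_norm_sub _ _ _
    _ ≤ K * ‖x₁ - x₂‖ + K * ‖y₁ - y₂‖ := add_le_add (hx y₁ x₁ x₂) (hy x₂ y₁ y₂)
    _ = K * (‖x₁ - x₂‖ + ‖y₁ - y₂‖) := by ring

variable {E : Type*} [NormedAddCommGroup E] [InnerProductSpace ℝ E]

theorem mul_norm_le_norm_of_mul_norm_sq_le_inner {μ : ℝ} {v w : E}
    (h : μ * ‖v‖ ^ 2 ≤ ⟪w, v⟫) : μ * ‖v‖ ≤ ‖w‖ := by
  rcases (norm_nonneg v).eq_or_lt with hv | hv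
  · simp [← hv]
  · have := h.trans (real_inner_le_norm w v)
    nlinarith

theorem norm_le_div_of_coercive {T : E → E} {μ : ℝ} (hμ : 0 < μ)
    (hT : ∀ v, μ * ‖v‖ ^ 2 ≤ ⟪T v, v⟫) {u v : E} (huv : T u = v) : ‖u‖ ≤ ‖v‖ / μ := by
  rw [le_div_iff₀' hμ, ← huv]
  exact mul_norm_le_norm_of_mul_norm_sq_le_inner (hT u)

theorem norm_sub_apply_le_of_coercive {T₁ T₂ S₁ S₂ : E →L[ℝ] E} {μ : ℝ} (hμ : 0 < μ)
    (hT₁ : ∀ v, μ * ‖v‖ ^ 2 ≤ ⟪T₁ v, v⟫) (hT₂ : ∀ v, μ * ‖v‖ ^ 2 ≤ ⟪T₂ v, v⟫)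
    (hS₁T₁ : ∀ v, S₁ (T₁ v) = v) (hT₁S₁ : ∀ v, T₁ (S₁ v) = v) (hT₂S₂ : ∀ v, T₂ (S₂ v) = v)
    (v : E) : ‖S₁ v - S₂ v‖ ≤ ‖T₁ - T₂‖ * (‖v‖ / μ) / μ := by
  -- second resolvent identity `S₁ - S₂ = S₁ (T₂ - T₁) S₂`
  have hres : S₁ v - S₂ v = S₁ ((T₂ - T₁) (S₂ v)) := by
    simp only [sub_apply, map_sub, hT₂S₂, hS₁T₁]
  calc ‖S₁ v - S₂ v‖ ≤ ‖(T₂ - T₁) (S₂ v)‖ / μ := hres ▸ norm_le_div_of_coercive hμ hT₁ (hT₁S₁ _)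
    _ ≤ ‖T₁ - T₂‖ * (‖v‖ / μ) / μ := by
        rw [norm_sub_rev T₁ T₂]
        gcongr
        exact ((T₂ - T₁).le_opNorm _).trans
          (by gcongr; exact norm_le_div_of_coercive hμ hT₂ (hT₂S₂ v))

theorem norm_sub_sub_apply_inverse_le {F : Type*} [NormedAddCommGroup F] [NormedSpace ℝ F]
    {T₁ T₂ S₁ S₂ : E →L[ℝ] E} {μ : ℝ} (hμ : 0 < μ)
    (hT₁ : ∀ v, μ * ‖v‖ ^ 2 ≤ ⟪T₁ v, v⟫) (hT₂ : ∀ v, μ * ‖v‖ ^ 2 ≤ ⟪T₂ v, v⟫)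
    (hS₁T₁ : ∀ v, S₁ (T₁ v) = v) (hT₁S₁ : ∀ v, T₁ (S₁ v) = v) (hT₂S₂ : ∀ v, T₂ (S₂ v) = v)
    (a₁ a₂ : F) (A₁ A₂ : E →L[ℝ] F) (v₁ v₂ : E) :
    ‖(a₁ - A₁ (S₁ v₁)) - (a₂ - A₂ (S₂ v₂))‖ ≤
      ‖a₁ - a₂‖ + ‖A₁ - A₂‖ * (‖v₁‖ / μ) + ‖A₂‖ * (‖T₁ - T₂‖ * (‖v₁‖ / μ) / μ) +
        ‖A₂‖ * (‖v₁ - v₂‖ / μ) := by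
  have hsplit : (a₁ - A₁ (S₁ v₁)) - (a₂ - A₂ (S₂ v₂)) =
      (a₁ - a₂) - (A₁ - A₂) (S₁ v₁) - A₂ (S₁ v₁ - S₂ v₁) - A₂ (S₂ (v₁ - v₂)) := by
    simp only [sub_apply, map_sub]
    abel
  rw [hsplit]
  refine (norm_sub_le _ _).trans (add_le_add ((norm_sub_le _ _).trans (add_le_add
    ((norm_sub_le _ _).trans (add_le_add le_rfl ?_)) ?_)) ?_)
  · exact (A₁ - A₂).le_opNorm_of_le (norm_le_div_of_coercive hμ hT₁ (hT₁S₁ v₁))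
  · exact A₂.le_opNorm_of_le (norm_sub_apply_le_of_coercive hμ hT₁ hT₂ hS₁T₁ hT₁S₁ hT₂S₂ v₁)
  · exact A₂.le_opNorm_of_le (norm_le_div_of_coercive hμ hT₂ (hT₂S₂ _))

theorem mul_norm_sq_le_inner_sub_of_hasFDerivAt {F : E → E} {F' : E → E →L[ℝ] E} {μ : ℝ}
    (hF : ∀ y, HasFDerivAt F (F' y) y) (hF' : ∀ y v, μ * ‖v‖ ^ 2 ≤ ⟪F' y v, v⟫) (y₁ y₂ : E) :
    μ * ‖y₁ - y₂‖ ^ 2 ≤ ⟪F y₁ - F y₂, y₁ - y₂⟫ := by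
  set d := y₁ - y₂
  -- `t ↦ ⟪F (y₂ + t d), d⟫ - t μ ‖d‖²` is monotone, since its derivative is `⟪F' d, d⟫ - μ ‖d‖²`
  set h : ℝ → ℝ := fun t => ⟪d, F (y₂ + t • d)⟫ - t * (μ * ‖d‖ ^ 2)
  have hderiv (t : ℝ) : HasDerivAt h (⟪d, F' (y₂ + t • d) d⟫ - μ * ‖d‖ ^ 2) t := by
    have hline : HasDerivAt (fun t : ℝ => y₂ + t • d) d t := by
      simpa using ((hasDerivAt_id t).smul_const d).const_add y₂
    exact ((innerSL ℝ d).hasFDerivAt.comp_hasDerivAt t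
      ((hF _).comp_hasDerivAt t hline)).sub (hasDerivAt_mul_const _)
  have hmono : Monotone h := by
    refine monotone_of_deriv_nonneg (fun t => (hderiv t).differentiableAt) (fun t => ?_)
    rw [(hderiv t).deriv, real_inner_comm, sub_nonneg]
    exact hF' _ d
  have h01 : h 0 ≤ h 1 := hmono zero_le_one
  simp only [h, zero_smul, add_zero, zero_mul, sub_zero, one_smul, one_mul, d,
    add_sub_cancel] at h01
  rw [inner_sub_left, real_inner_comm d, real_inner_comm d]
  linarith

theorem norm_sub_le_of_strongly_monotone_of_eq_zero {G : X → E → E} {μ L : ℝ} (hμ : 0 < μ)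
    (hG : ∀ x y₁ y₂, μ * ‖y₁ - y₂‖ ^ 2 ≤ ⟪G x y₁ - G x y₂, y₁ - y₂⟫)
    (hGLip : ∀ y x₁ x₂, ‖G x₁ y - G x₂ y‖ ≤ L * ‖x₁ - x₂‖)
    {ystar : X → E} (hzero : ∀ x, G x (ystar x) = 0) (x₁ x₂ : X) :
    ‖ystar x₁ - ystar x₂‖ ≤ L / μ * ‖x₁ - x₂‖ := by
  have hmono : μ * ‖ystar x₁ - ystar x₂‖ ≤ ‖G x₂ (ystar x₁)‖ := by
    simpa [hzero] using mul_norm_le_norm_of_mul_norm_sq_le_inner (hG x₂ (ystar x₁) (ystar x₂))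
  have hlip : ‖G x₂ (ystar x₁)‖ ≤ L * ‖x₁ - x₂‖ := by
    simpa [hzero, norm_sub_rev x₂] using hGLip (ystar x₁) x₂ x₁
  rw [div_mul_eq_mul_div, le_div_iff₀' hμ]
  linarith

end

omit [FiniteDimensional ℝ H₁] in
theorem differentiable_grady_right {g : H₁ → H₂ → ℝ}
    (hg : ContDiff ℝ 2 fun p : H₁ × H₂ => g p.1 p.2) (x : H₁) :
    Differentiable ℝ (grady g x) := by
  have hgx : ContDiff ℝ 2 (g x) := hg.comp (contDiff_const.prodMk contDiff_id)
  have hgrad : grady g x = (InnerProductSpace.toDual ℝ H₂).symm ∘ fderiv ℝ (g x) := rfl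
  rw [hgrad]
  exact ((InnerProductSpace.toDual ℝ H₂).symm.contDiff.comp
    (hgx.fderiv_right (by norm_num))).differentiable one_ne_zero

theorem norm_hessxy_le {g : H₁ → H₂ → ℝ} {L : ℝ} (hL : 0 ≤ L) {y : H₂}
    (hLip : ∀ x₁ x₂ : H₁, ‖grady g x₁ y - grady g x₂ y‖ ≤ L * ‖x₁ - x₂‖) (x : H₁) :
    ‖hessxy g x y‖ ≤ L := by
  rw [hessxy, LinearIsometryEquiv.norm_map]
  exact norm_fderiv_le_of_lip' ℝ hL (Filter.Eventually.of_forall fun x' => hLip x' x)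

theorem statement4_general
    (f g : H₁ → H₂ → ℝ) (μ L ρ M : ℝ)
    (hμ : 0 < μ) (hL : 0 ≤ L) (hρ : 0 ≤ ρ) (hM : 0 ≤ M)
    (hg : ContDiff ℝ 2 fun p : H₁ × H₂ => g p.1 p.2)
    -- bounded gradients of `f`
    (hfybd : ∀ (x : H₁) (y : H₂), ‖grady f x y‖ ≤ M)
    -- `∇ₓ f` and `∇_y f` are `L`-Lipschitz in each variable
    (hfxLx : ∀ (y : H₂) (x₁ x₂ : H₁), ‖gradx f x₁ y - gradx f x₂ y‖ ≤ L * ‖x₁ - x₂‖)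
    (hfxLy : ∀ (x : H₁) (y₁ y₂ : H₂), ‖gradx f x y₁ - gradx f x y₂‖ ≤ L * ‖y₁ - y₂‖)
    (hfyLx : ∀ (y : H₂) (x₁ x₂ : H₁), ‖grady f x₁ y - grady f x₂ y‖ ≤ L * ‖x₁ - x₂‖)
    (hfyLy : ∀ (x : H₁) (y₁ y₂ : H₂), ‖grady f x y₁ - grady f x y₂‖ ≤ L * ‖y₁ - y₂‖)
    -- `∇ₓ g` and `∇_y g` are `L`-Lipschitz in each variable
    (hgyLx : ∀ (y : H₂) (x₁ x₂ : H₁), ‖grady g x₁ y - grady g x₂ y‖ ≤ L * ‖x₁ - x₂‖)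
    -- `∇²_{yy} g` and `∇²_{xy} g` are `ρ`-Lipschitz in operator norm in each variable
    (hyyLx : ∀ (y : H₂) (x₁ x₂ : H₁), ‖hessyy g x₁ y - hessyy g x₂ y‖ ≤ ρ * ‖x₁ - x₂‖)
    (hyyLy : ∀ (x : H₁) (y₁ y₂ : H₂), ‖hessyy g x y₁ - hessyy g x y₂‖ ≤ ρ * ‖y₁ - y₂‖)
    (hxyLx : ∀ (y : H₂) (x₁ x₂ : H₁), ‖hessxy g x₁ y - hessxy g x₂ y‖ ≤ ρ * ‖x₁ - x₂‖)
    (hxyLy : ∀ (x : H₁) (y₁ y₂ : H₂), ‖hessxy g x y₁ - hessxy g x y₂‖ ≤ ρ * ‖y₁ - y₂‖)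
    -- `∇²_{yy} g(x,y) ⪰ μ · id` for all `(x,y)`
    (hpos : ∀ (x : H₁) (y v : H₂), μ * ‖v‖ ^ 2 ≤ ⟪hessyy g x y v, v⟫)
    -- `y*(x)` is the (unique) minimizer of `g(x, ·)`, characterized by `∇_y g(x, y*(x)) = 0`
    (ystar : H₁ → H₂)
    (hstat : ∀ x : H₁, grady g x (ystar x) = 0)
    -- `Hinv x` is the inverse of `∇²_{yy} g(x, y*(x))`
    (Hinv : H₁ → H₂ →L[ℝ] H₂)
    (hHinv1 : ∀ x : H₁, (Hinv x).comp (hessyy g x (ystar x)) = ContinuousLinearMap.id ℝ H₂)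
    (hHinv2 : ∀ x : H₁, (hessyy g x (ystar x)).comp (Hinv x) = ContinuousLinearMap.id ℝ H₂)
    -- the hypergradient map
    (GF : H₁ → H₁)
    (hGF : ∀ x : H₁,
      GF x = gradx f x (ystar x) - hessxy g x (ystar x) (Hinv x (grady f x (ystar x)))) :
    ∀ x₁ x₂ : H₁,
      ‖GF x₁ - GF x₂‖ ≤
        (L / μ + 1) * (L + ρ * M / μ + ρ * L * M / μ ^ 2 + L ^ 2 / μ) * ‖x₁ - x₂‖ := by
  intro x₁ x₂
  have hinv₁ (x : H₁) (v : H₂) : Hinv x (hessyy g x (ystar x) v) = v :=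
    DFunLike.congr_fun (hHinv1 x) v
  have hinv₂ (x : H₁) (v : H₂) : hessyy g x (ystar x) (Hinv x v) = v :=
    DFunLike.congr_fun (hHinv2 x) v
  have hystar : ‖ystar x₁ - ystar x₂‖ ≤ L / μ * ‖x₁ - x₂‖ :=
    norm_sub_le_of_strongly_monotone_of_eq_zero hμ
      (fun x => mul_norm_sq_le_inner_sub_of_hasFDerivAt
        (fun y => (differentiable_grady_right hg x y).hasFDerivAt) (hpos x))
      hgyLx hstat x₁ x₂
  set δ := ‖x₁ - x₂‖ + ‖ystar x₁ - ystar x₂‖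
  calc ‖GF x₁ - GF x₂‖
      ≤ L * δ + ρ * δ * (M / μ) + L * (ρ * δ * (M / μ) / μ) + L * (L * δ / μ) := by
        rw [hGF, hGF]
        refine (norm_sub_sub_apply_inverse_le hμ (hpos x₁ _) (hpos x₂ _) (hinv₁ x₁) (hinv₂ x₁)
          (hinv₂ x₂) _ _ _ _ _ _).trans ?_
        have hhessxy := norm_hessxy_le hL (hgyLx (ystar x₂)) x₂
        gcongr
        · exact norm_sub_le_of_lipschitz_left_right hfxLx hfxLy _ _ _ _
        · exact norm_sub_le_of_lipschitz_left_right hxyLx hxyLy _ _ _ _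
        · exact hfybd _ _
        · exact norm_sub_le_of_lipschitz_left_right hyyLx hyyLy _ _ _ _
        · exact hfybd _ _
        · exact norm_sub_le_of_lipschitz_left_right hfyLx hfyLy _ _ _ _
    _ = (L + ρ * M / μ + ρ * L * M / μ ^ 2 + L ^ 2 / μ) * δ := by
        field_simp
    _ ≤ (L + ρ * M / μ + ρ * L * M / μ ^ 2 + L ^ 2 / μ) * ((L / μ + 1) * ‖x₁ - x₂‖) := by
        gcongr
        linarith
    _ = (L / μ + 1) * (L + ρ * M / μ + ρ * L * M / μ ^ 2 + L ^ 2 / μ) * ‖x₁ - x₂‖ := by ring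

/-- In the Euclidean bilevel setting with the Lipschitz-and-boundedness
assumptions, the hypergradient map
`x ↦ ∇F(x) = ∇ₓ f(x, y*(x)) − ∇²_{xy} g(x, y*(x))[(∇²_{yy} g(x, y*(x)))⁻¹ ∇_y f(x, y*(x))]`
is Lipschitz with constant `L_F := (L/μ + 1)(L + ρM/μ + ρLM/μ² + L²/μ)`. -/
theorem statement4
    (f g : H₁ → H₂ → ℝ) (μ L ρ M : ℝ)
    (hμ : 0 < μ) (hL : 0 ≤ L) (hρ : 0 ≤ ρ) (hM : 0 ≤ M)
    (hf : ContDiff ℝ 2 fun p : H₁ × H₂ => f p.1 p.2)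
    (hg : ContDiff ℝ 2 fun p : H₁ × H₂ => g p.1 p.2)
    -- bounded gradients of `f`
    (hfxbd : ∀ (x : H₁) (y : H₂), ‖gradx f x y‖ ≤ M)
    (hfybd : ∀ (x : H₁) (y : H₂), ‖grady f x y‖ ≤ M)
    -- `∇ₓ f` and `∇_y f` are `L`-Lipschitz in each variable
    (hfxLx : ∀ (y : H₂) (x₁ x₂ : H₁), ‖gradx f x₁ y - gradx f x₂ y‖ ≤ L * ‖x₁ - x₂‖)
    (hfxLy : ∀ (x : H₁) (y₁ y₂ : H₂), ‖gradx f x y₁ - gradx f x y₂‖ ≤ L * ‖y₁ - y₂‖)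
    (hfyLx : ∀ (y : H₂) (x₁ x₂ : H₁), ‖grady f x₁ y - grady f x₂ y‖ ≤ L * ‖x₁ - x₂‖)
    (hfyLy : ∀ (x : H₁) (y₁ y₂ : H₂), ‖grady f x y₁ - grady f x y₂‖ ≤ L * ‖y₁ - y₂‖)
    -- `∇ₓ g` and `∇_y g` are `L`-Lipschitz in each variable
    (hgxLx : ∀ (y : H₂) (x₁ x₂ : H₁), ‖gradx g x₁ y - gradx g x₂ y‖ ≤ L * ‖x₁ - x₂‖)
    (hgxLy : ∀ (x : H₁) (y₁ y₂ : H₂), ‖gradx g x y₁ - gradx g x y₂‖ ≤ L * ‖y₁ - y₂‖)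
    (hgyLx : ∀ (y : H₂) (x₁ x₂ : H₁), ‖grady g x₁ y - grady g x₂ y‖ ≤ L * ‖x₁ - x₂‖)
    (hgyLy : ∀ (x : H₁) (y₁ y₂ : H₂), ‖grady g x y₁ - grady g x y₂‖ ≤ L * ‖y₁ - y₂‖)
    -- `∇²_{yy} g` and `∇²_{xy} g` are `ρ`-Lipschitz in operator norm in each variable
    (hyyLx : ∀ (y : H₂) (x₁ x₂ : H₁), ‖hessyy g x₁ y - hessyy g x₂ y‖ ≤ ρ * ‖x₁ - x₂‖)
    (hyyLy : ∀ (x : H₁) (y₁ y₂ : H₂), ‖hessyy g x y₁ - hessyy g x y₂‖ ≤ ρ * ‖y₁ - y₂‖)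
    (hxyLx : ∀ (y : H₂) (x₁ x₂ : H₁), ‖hessxy g x₁ y - hessxy g x₂ y‖ ≤ ρ * ‖x₁ - x₂‖)
    (hxyLy : ∀ (x : H₁) (y₁ y₂ : H₂), ‖hessxy g x y₁ - hessxy g x y₂‖ ≤ ρ * ‖y₁ - y₂‖)
    -- `∇²_{yy} g(x,y) ⪰ μ · id` for all `(x,y)`
    (hpos : ∀ (x : H₁) (y v : H₂), μ * ‖v‖ ^ 2 ≤ ⟪hessyy g x y v, v⟫)
    -- `y*(x)` is the (unique) minimizer of `g(x, ·)`, characterized by `∇_y g(x, y*(x)) = 0`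
    (ystar : H₁ → H₂)
    (hmin : ∀ (x : H₁) (z : H₂), g x (ystar x) ≤ g x z)
    (hstat : ∀ x : H₁, grady g x (ystar x) = 0)
    -- `Hinv x` is the inverse of `∇²_{yy} g(x, y*(x))`
    (Hinv : H₁ → H₂ →L[ℝ] H₂)
    (hHinv1 : ∀ x : H₁, (Hinv x).comp (hessyy g x (ystar x)) = ContinuousLinearMap.id ℝ H₂)
    (hHinv2 : ∀ x : H₁, (hessyy g x (ystar x)).comp (Hinv x) = ContinuousLinearMap.id ℝ H₂)
    -- the hypergradient map
    (GF : H₁ → H₁)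
    (hGF : ∀ x : H₁,
      GF x = gradx f x (ystar x) - hessxy g x (ystar x) (Hinv x (grady f x (ystar x)))) :
    ∀ x₁ x₂ : H₁,
      ‖GF x₁ - GF x₂‖ ≤
        (L / μ + 1) * (L + ρ * M / μ + ρ * L * M / μ ^ 2 + L ^ 2 / μ) * ‖x₁ - x₂‖ :=
  statement4_general f g μ L ρ M hμ hL hρ hM hg hfybd hfxLx hfxLy hfyLx hfyLy hgyLx hyyLx hyyLy
    hxyLx hxyLy hpos ystar hstat Hinv hHinv1 hHinv2 GF hGF
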